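/- arXiv:2503.24054 — 2 statements merged into one kernel-verified Lean document; each statement's English description precedes it below -/
import Mathlib

section
/- Let p, q ∈ ℝ be constants, let (a_n)_{n≥0} be a real sequence, and let (a_n^k) satisfy a_n^0 = a_n and a_n^k = p·a_n^{k−1} + q·(n+1)·a_{n+1}^{k−1} for n ≥ 0, k ≥ 1. Then the exponential generating function of the final sequence satisfies Ā(t) = exp(p t) · a(q t) as formal power series in ℝ⟦t⟧; equivalently, for every k ≥ 0, a_0^k = Σ_{ℓ=0}^{k} (k!/(k−ℓ)!) · p^{k−ℓ} · q^ℓ · a_ℓ^0. -/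
open PowerSeries

/-!
On ordinary generating functions the recurrence reads `a^{k+1}(t) = p a^k(t) + q (a^k)'(t)`, so
`a^k(t) = (p + q D)^k a(t)`. Since `p` and `q D` commute, the binomial theorem and
`constantCoeff (Dˡ f) = ℓ! [tˡ] f` give `a_0^k = Σ_ℓ k^{(ℓ)} p^{k-ℓ} q^ℓ a_ℓ`, with `k^{(ℓ)}` the
falling factorial; dividing by `k!` this is the Cauchy product of `exp(pt)` and `a(qt)`.
-/

section EulerSeidel

variable {R : Type*} [CommSemiring R]

noncomputable def eulerSeidelOp (p q : R) : Module.End R R⟦X⟧ :=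
  p • 1 + q • (d⁄dX R).toLinearMap

theorem coeff_eulerSeidelOp (p q : R) (f : R⟦X⟧) (n : ℕ) :
    coeff n (eulerSeidelOp p q f) = p * coeff n f + q * (n + 1) * coeff (n + 1) f := by
  simp only [eulerSeidelOp, LinearMap.add_apply, LinearMap.smul_apply, Module.End.one_apply,
    Derivation.coeFn_coe, map_add, coeff_smul, coeff_derivative, smul_eq_mul]
  ring

theorem constantCoeff_eulerSeidelOp_pow_apply (p q : R) (f : R⟦X⟧) (k : ℕ) :
    constantCoeff ((eulerSeidelOp p q ^ k) f) =
      ∑ ℓ ∈ Finset.range (k + 1), (k.descFactorial ℓ : R) * p ^ (k - ℓ) * q ^ ℓ * coeff ℓ f := by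
  have hcomm : Commute (q • (d⁄dX R).toLinearMap) (p • 1 : Module.End R R⟦X⟧) :=
    (Commute.one_right _).smul_right p
  rw [eulerSeidelOp, add_comm, hcomm.add_pow, LinearMap.sum_apply, map_sum]
  refine Finset.sum_congr rfl fun ℓ _ => ?_
  rw [← nsmul_eq_mul', LinearMap.smul_apply, map_nsmul]
  simp only [smul_pow, one_pow, Module.End.mul_apply, LinearMap.smul_apply, Module.End.pow_apply,
    Derivation.coeFn_coe, constantCoeff_smul, constantCoeff_iterate_derivative, Module.End.one_apply,
    coeff_smul, smul_eq_mul, nsmul_eq_mul, Nat.descFactorial_eq_factorial_mul_choose, Nat.cast_mul]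
  ring

theorem mk_eq_eulerSeidelOp_pow_apply (p q : R) (a : ℕ → ℕ → R)
    (hrec : ∀ n k, a n (k + 1) = p * a n k + q * ((n : R) + 1) * a (n + 1) k) (k : ℕ) :
    mk (fun n => a n k) = (eulerSeidelOp p q ^ k) (mk fun n => a n 0) := by
  induction k with
  | zero => rfl
  | succ k ih =>
    ext n
    rw [pow_succ', Module.End.mul_apply, ← ih, coeff_eulerSeidelOp]
    simp only [coeff_mk, hrec]

theorem eulerSeidel_final_eq_sum (p q : R) (a : ℕ → ℕ → R)
    (hrec : ∀ n k, a n (k + 1) = p * a n k + q * ((n : R) + 1) * a (n + 1) k) (k : ℕ) :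
    a 0 k = ∑ ℓ ∈ Finset.range (k + 1), (k.descFactorial ℓ : R) * p ^ (k - ℓ) * q ^ ℓ * a ℓ 0 := by
  simpa [constantCoeff_eulerSeidelOp_pow_apply] using
    congrArg constantCoeff (mk_eq_eulerSeidelOp_pow_apply p q a hrec k)

end EulerSeidel

theorem Nat.cast_descFactorial_eq_div {K : Type*} [DivisionSemiring K] [CharZero K] {n k : ℕ}
    (h : k ≤ n) : (n.descFactorial k : K) = n.factorial / (n - k).factorial := by
  rw [eq_div_iff (Nat.cast_ne_zero.mpr (Nat.factorial_ne_zero _)), ← Nat.cast_mul, mul_comm,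
    Nat.factorial_mul_descFactorial h]

theorem PowerSeries.coeff_rescale_exp_mul {K : Type*} [Field K] [CharZero K] (p : K) (f : K⟦X⟧)
    (k : ℕ) :
    coeff k (rescale p (exp K) * f) =
      ∑ ℓ ∈ Finset.range (k + 1), p ^ (k - ℓ) / (k - ℓ).factorial * coeff ℓ f := by
  rw [coeff_mul, ← Finset.Nat.sum_antidiagonal_swap]
  simp only [Prod.fst_swap, Prod.snd_swap]
  rw [Finset.Nat.sum_antidiagonal_eq_sum_range_succ (fun i j => coeff j _ * coeff i _)]
  refine Finset.sum_congr rfl fun ℓ _ => ?_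
  simp only [coeff_rescale, coeff_exp, map_div₀, map_one, map_natCast]
  ring

/-- Theorem 2.11: if `a_n^k = p a_n^{k-1} + q(n+1) a_{n+1}^{k-1}`, then the exponential
generating function of the final sequence is `exp(pt) a(qt)`; equivalently
`a_0^k = Σ_ℓ (k!/(k-ℓ)!) p^{k-ℓ} q^ℓ a_ℓ^0`. -/
theorem egf_final_eq (p q : ℝ) (a₀ : ℕ → ℝ) (a : ℕ → ℕ → ℝ)
    (h0 : ∀ n, a n 0 = a₀ n)
    (hrec : ∀ n k, a n (k + 1) = p * a n k + q * ((n : ℝ) + 1) * a (n + 1) k) :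
    PowerSeries.mk (fun k => a 0 k / k.factorial) =
      rescale p (exp ℝ) * PowerSeries.mk (fun n => a₀ n * q ^ n) ∧
    ∀ k, a 0 k = ∑ ℓ ∈ Finset.range (k + 1),
      ((k.factorial : ℝ) / (k - ℓ).factorial) * p ^ (k - ℓ) * q ^ ℓ * a₀ ℓ := by
  have hsum (k : ℕ) : a 0 k = ∑ ℓ ∈ Finset.range (k + 1),
      ((k.factorial : ℝ) / (k - ℓ).factorial) * p ^ (k - ℓ) * q ^ ℓ * a₀ ℓ := by
    rw [eulerSeidel_final_eq_sum p q a hrec k]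
    refine Finset.sum_congr rfl fun ℓ hℓ => ?_
    rw [Nat.cast_descFactorial_eq_div (Nat.lt_succ_iff.mp (Finset.mem_range.mp hℓ)), h0]
  refine ⟨?_, hsum⟩
  ext k
  rw [coeff_mk, coeff_rescale_exp_mul, hsum k, Finset.sum_div]
  refine Finset.sum_congr rfl fun ℓ _ => ?_
  rw [coeff_mk]
  field_simp
end

section
/- Let p, q ∈ ℝ be constants, let (a_n)_{n≥0} be a real sequence, and let (a_n^k) satisfy a_n^0 = a_n and a_n^k = (p/k)·a_n^{k−1} + (q/k)·a_{n+1}^{k−1} for n ≥ 0, k ≥ 1. Then the ordinary generating function of the final sequence satisfies ā(t) = exp(p t) · A(q t) as formal power series in ℝ⟦t⟧; equivalently, for every k ≥ 0, a_0^k = Σ_{ℓ=0}^{k} ( p^{k−ℓ}/(k−ℓ)! ) · ( q^ℓ/ℓ! ) · a_ℓ^0. -/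
/-!
Put `F n := exp(pt) · Σ_j a_{n+j} (qt)^j / j!`. Since the derivative of `exp(pt)` is `p exp(pt)`
and differentiating the second factor shifts `n` by one and multiplies by `q`, these series satisfy
`F_n' = p F_n + q F_{n+1}`. Read off coefficientwise, this system is exactly the recurrence
`(k + 1) a_n^{k+1} = p a_n^k + q a_{n+1}^k`, and `F_n(0) = a_n`, so `a_n^k` is the `k`-th
coefficient of `F_n`; for `n = 0` this is the claim.
-/

open PowerSeries Finset

namespace PowerSeries

theorem derivative_rescale {R : Type*} [CommSemiring R] (c : R) (f : R⟦X⟧) :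
    d⁄dX R (rescale c f) = c • rescale c (d⁄dX R f) := by
  ext n
  simp only [coeff_derivative, coeff_rescale, coeff_smul, smul_eq_mul, pow_succ]
  ring

section Field

variable {K : Type*} [Field K] [CharZero K]

noncomputable def egf (b : ℕ → K) : K⟦X⟧ :=
  mk fun n => b n / n.factorial

theorem derivative_egf (b : ℕ → K) : d⁄dX K (egf b) = egf fun n => b (n + 1) := by
  ext n
  simp only [egf, coeff_derivative, coeff_mk, Nat.factorial_succ]
  push_cast
  field_simp

theorem rescale_egf (c : K) (b : ℕ → K) :
    rescale c (egf b) = mk fun n => b n / n.factorial * c ^ n := by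
  ext n
  simp only [egf, coeff_rescale, coeff_mk]
  ring

theorem coeff_rescale_exp_mul_s10 (c : K) (f : K⟦X⟧) (k : ℕ) :
    coeff k (rescale c (exp K) * f) =
      ∑ ℓ ∈ range (k + 1), c ^ (k - ℓ) / (k - ℓ).factorial * coeff ℓ f := by
  rw [mul_comm, coeff_mul, Finset.Nat.sum_antidiagonal_eq_sum_range_succ
    (fun i j => coeff i f * coeff j (rescale c (exp K)))]
  refine sum_congr rfl fun ℓ _ => ?_
  simp only [coeff_rescale, coeff_exp, map_div₀, map_one, map_natCast]
  ring

theorem eq_coeff_of_derivative_eq {p q : K} {F : ℕ → K⟦X⟧}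
    (hF : ∀ n, d⁄dX K (F n) = p • F n + q • F (n + 1)) {a : ℕ → ℕ → K}
    (h0 : ∀ n, a n 0 = coeff 0 (F n))
    (hrec : ∀ n k, a n (k + 1) = p / ((k : K) + 1) * a n k + q / ((k : K) + 1) * a (n + 1) k)
    (k n : ℕ) : a n k = coeff k (F n) := by
  induction k generalizing n with
  | zero => exact h0 n
  | succ k ih =>
    have hcoeff : coeff (k + 1) (F n) * (k + 1) = p * coeff k (F n) + q * coeff k (F (n + 1)) := by
      simpa only [coeff_derivative, map_add, coeff_smul, smul_eq_mul] using
        congrArg (coeff k) (hF n)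
    rw [hrec, ih, ih, eq_div_of_mul_eq (Nat.cast_add_one_ne_zero k) hcoeff]
    field_simp

end Field

end PowerSeries

/-- Theorem 2.12: if `a_n^k = (p/k) a_n^{k-1} + (q/k) a_{n+1}^{k-1}`, then the ordinary
generating function of the final sequence is `exp(pt) A(qt)`; equivalently
`a_0^k = Σ_ℓ (p^{k-ℓ}/(k-ℓ)!) (q^ℓ/ℓ!) a_ℓ^0`. -/
theorem ogf_final_eq (p q : ℝ) (a₀ : ℕ → ℝ) (a : ℕ → ℕ → ℝ)
    (h0 : ∀ n, a n 0 = a₀ n)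
    (hrec : ∀ n k, a n (k + 1) =
      p / ((k : ℝ) + 1) * a n k + q / ((k : ℝ) + 1) * a (n + 1) k) :
    PowerSeries.mk (fun k => a 0 k) =
      rescale p (exp ℝ) * PowerSeries.mk (fun n => a₀ n / n.factorial * q ^ n) ∧
    ∀ k, a 0 k = ∑ ℓ ∈ Finset.range (k + 1),
      (p ^ (k - ℓ) / (k - ℓ).factorial) * (q ^ ℓ / ℓ.factorial) * a₀ ℓ := by
  set F : ℕ → ℝ⟦X⟧ := fun n => rescale p (exp ℝ) * rescale q (egf fun j => a₀ (n + j))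
  have hF : ∀ n, d⁄dX ℝ (F n) = p • F n + q • F (n + 1) := by
    intro n
    have hshift : (fun j => a₀ (n + (j + 1))) = fun j => a₀ (n + 1 + j) := by
      funext j
      rw [Nat.add_right_comm, Nat.add_assoc]
    simp only [F, Derivation.leibniz, derivative_rescale, derivative_exp, derivative_egf, hshift,
      smul_eq_mul, smul_eq_C_mul]
    ring
  have hF0 : ∀ n, a n 0 = coeff 0 (F n) := by
    simp [F, egf, h0, coeff_mul, coeff_rescale]
  have ha : ∀ k, a 0 k = coeff k (F 0) := fun k => eq_coeff_of_derivative_eq hF hF0 hrec k 0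
  have hF_zero : F 0 = rescale p (exp ℝ) * mk fun n => a₀ n / n.factorial * q ^ n := by
    simp only [F, zero_add, rescale_egf]
  refine ⟨?_, fun k => ?_⟩
  · ext k
    rw [coeff_mk, ha, hF_zero]
  · rw [ha, hF_zero, coeff_rescale_exp_mul_s10]
    refine sum_congr rfl fun ℓ _ => ?_
    rw [coeff_mk]
    ring
end
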